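/- For k ≥ 2 and u > 0, (2π)^{−k/2} ∫_{B_k(√u)} (∂²/∂z₁²)(∂²/∂z₂²) exp(−|z|²/2) dz = (2u/k − 2u²/(k(k+2))) · u^{k/2−1} exp(−u/2) / (2^{k/2} Γ(k/2)). -/

import Mathlib

open MeasureTheory Real Set

lemma integral_split {m : ℕ} (F : (Fin (m+1) → ℝ) → ℝ) (hF : Integrable F) :
    (∫ z, F z) = ∫ w : Fin m → ℝ, ∫ x : ℝ, F (Fin.cons x w) := by
  have hmp := (volume_preserving_piFinSuccAbove (fun _ : Fin (m+1) => ℝ) 0).symm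
  have hint : Integrable (F ∘ (MeasurableEquiv.piFinSuccAbove (fun _ : Fin (m+1) => ℝ) 0).symm) := by
    rw [hmp.integrable_comp_emb (MeasurableEquiv.measurableEmbedding _)]
    exact hF
  rw [← hmp.integral_comp (MeasurableEquiv.measurableEmbedding _) F]
  rw [show (volume : Measure (ℝ × (Fin m → ℝ))) = (volume : Measure ℝ).prod volume from rfl]
  rw [integral_prod_symm _ (by rw [show (volume : Measure (ℝ × (Fin m → ℝ))) = (volume : Measure ℝ).prod volume from rfl] at hint; exact hint)]
  congr 1
  funext w
  congr 1
  funext x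
  congr 1
  simp [MeasurableEquiv.piFinSuccAbove_symm_apply, Fin.insertNthEquiv, Fin.insertNth_zero]


lemma integrable_split {m : ℕ} (F : (Fin (m+1) → ℝ) → ℝ) (hF : Integrable F) :
    Integrable (fun w : Fin m → ℝ => ∫ x : ℝ, F (Fin.cons x w)) := by
  have hmp := (volume_preserving_piFinSuccAbove (fun _ : Fin (m+1) => ℝ) 0).symm
  have hint : Integrable (F ∘ (MeasurableEquiv.piFinSuccAbove (fun _ : Fin (m+1) => ℝ) 0).symm) := by
    rw [hmp.integrable_comp_emb (MeasurableEquiv.measurableEmbedding _)]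
    exact hF
  have h2 := hint.integral_prod_right
  convert h2 using 2 with w
  congr 1
  funext x
  congr 1
  simp [MeasurableEquiv.piFinSuccAbove_symm_apply, Fin.insertNthEquiv, Fin.insertNth_zero]

lemma gauss_hasDerivAt (C A x : ℝ) :
    HasDerivAt (fun t => C * Real.exp (-(t^2+A)/2)) (C * (Real.exp (-(x^2+A)/2) * (-x))) x := by
  have h1 : HasDerivAt (fun t : ℝ => -(t^2+A)/2) (-x) x := by
    have := (((hasDerivAt_pow 2 x).add_const A).neg).div_const 2
    refine this.congr_deriv ?_
    ring
  exact (h1.exp.const_mul C)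

lemma gauss_iteratedDeriv' (C A : ℝ) (x : ℝ) :
    iteratedDeriv 2 (fun t => C * Real.exp (-(t^2+A)/2)) x
      = C * ((x^2-1) * Real.exp (-(x^2+A)/2)) := by
  rw [iteratedDeriv_succ, iteratedDeriv_one]
  have hd : deriv (fun t => C * Real.exp (-(t^2+A)/2))
      = fun x => C * (Real.exp (-(x^2+A)/2) * (-x)) := by
    funext y
    exact (gauss_hasDerivAt C A y).deriv
  rw [hd]
  have h2 : HasDerivAt (fun y : ℝ => C * (Real.exp (-(y^2+A)/2) * (-y)))
      (C * ((x^2-1) * Real.exp (-(x^2+A)/2))) x := by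
    have h1 : HasDerivAt (fun t : ℝ => -(t^2+A)/2) (-x) x := by
      have := (((hasDerivAt_pow 2 x).add_const A).neg).div_const 2
      refine this.congr_deriv ?_
      ring
    have := (h1.exp.mul ((hasDerivAt_id x).neg)).const_mul C
    refine this.congr_deriv ?_
    simp only [Pi.neg_apply, id]
    ring
  exact h2.deriv

lemma gauss_iteratedDeriv (A : ℝ) (x : ℝ) :
    iteratedDeriv 2 (fun t => Real.exp (-(t^2+A)/2)) x = (x^2-1) * Real.exp (-(x^2+A)/2) := by
  have := gauss_iteratedDeriv' 1 A x
  simpa using this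

lemma sum_update_sq {n : ℕ} (f : Fin n → ℝ) (j : Fin n) (a : ℝ) :
    ∑ i, Function.update f j a i ^ 2 = a^2 - f j ^2 + ∑ i, f i ^2 := by
  have : (fun i => Function.update f j a i ^ 2) = Function.update (fun i => f i ^2) j (a^2) := by
    funext i
    rcases eq_or_ne i j with rfl | h
    · simp
    · simp [Function.update_of_ne h]
  rw [this, Finset.sum_update_of_mem (Finset.mem_univ j), ← Finset.erase_eq,
    Finset.sum_erase_eq_sub (Finset.mem_univ j)]
  ring

lemma intA (c : ℝ) :
    ∫ x : ℝ, (if x^2 ≤ c then (x^2-1) * Real.exp (-x^2/2) else 0)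
      = -2 * Real.sqrt c * Real.exp (-c/2) := by
  have hfun : (fun x : ℝ => if x^2 ≤ c then (x^2-1) * Real.exp (-x^2/2) else 0)
      = Set.indicator {x : ℝ | x^2 ≤ c} (fun x => (x^2-1) * Real.exp (-x^2/2)) := by
    funext x; simp [Set.indicator_apply, Set.mem_setOf_eq]
  have hmeas : MeasurableSet {x : ℝ | x^2 ≤ c} :=
    measurableSet_le (by fun_prop) measurable_const
  rw [hfun, integral_indicator hmeas]
  rcases le_or_gt c 0 with hc | hc
  · have hsub : {x : ℝ | x^2 ≤ c} ⊆ {0} := by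
      intro x hx
      simp only [Set.mem_setOf_eq] at hx
      have : x^2 = 0 := le_antisymm (hx.trans hc) (sq_nonneg x)
      simpa using pow_eq_zero_iff (n := 2) (by norm_num) |>.mp this
    have hnull : (volume : Measure ℝ).restrict {x : ℝ | x^2 ≤ c} = 0 :=
      Measure.restrict_eq_zero.mpr (measure_mono_null hsub (measure_singleton 0))
    rw [hnull, integral_zero_measure, Real.sqrt_eq_zero_of_nonpos hc]
    ring
  · have hset : {x : ℝ | x^2 ≤ c} = Set.Icc (-Real.sqrt c) (Real.sqrt c) := by
      ext x
      simp only [Set.mem_setOf_eq, Set.mem_Icc, ← abs_le]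
      constructor
      · exact fun h => Real.abs_le_sqrt h
      · intro h
        calc x^2 = |x|^2 := (sq_abs x).symm
        _ ≤ Real.sqrt c ^ 2 := by gcongr
        _ = c := Real.sq_sqrt hc.le
    have hab : -Real.sqrt c ≤ Real.sqrt c := by
      have := Real.sqrt_nonneg c; linarith
    rw [hset, MeasureTheory.integral_Icc_eq_integral_Ioc,
      ← intervalIntegral.integral_of_le hab]
    have hderiv : ∀ x ∈ Set.uIcc (-Real.sqrt c) (Real.sqrt c),
        HasDerivAt (fun x : ℝ => -x * Real.exp (-x^2/2)) ((x^2-1) * Real.exp (-x^2/2)) x := by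
      intro x _
      have h1 : HasDerivAt (fun t : ℝ => -t^2/2) (-x) x := by
        have := ((hasDerivAt_pow 2 x).neg).div_const 2
        refine this.congr_deriv ?_; push_cast; ring
      have := ((hasDerivAt_id x).neg).mul h1.exp
      refine this.congr_deriv ?_
      simp only [Pi.neg_apply, id]
      ring
    have hftc := intervalIntegral.integral_eq_sub_of_hasDerivAt hderiv
      (by apply Continuous.intervalIntegrable; fun_prop)
    rw [hftc]
    simp only [neg_neg, neg_sq]
    rw [Real.sq_sqrt hc.le]
    ring

lemma intB (d : ℝ) :
    ∫ y : ℝ, (y^2-1) * Real.sqrt (d - y^2)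
      = Real.pi * ((max d 0)^2 - 4 * max d 0) / 8 := by
  rcases le_or_gt d 0 with hd | hd
  · have hz : ∀ y : ℝ, (y^2-1) * Real.sqrt (d - y^2) = 0 := by
      intro y
      rw [Real.sqrt_eq_zero_of_nonpos (by nlinarith [sq_nonneg y]), mul_zero]
    rw [max_eq_right hd]
    simp only [hz, integral_zero]
    ring
  · set b := Real.sqrt d with hb
    have hb0 : 0 < b := Real.sqrt_pos.mpr hd
    have hb2 : b^2 = d := Real.sq_sqrt hd.le
    have hmax : max d 0 = d := max_eq_left hd.le
    have hsupp : ∀ y : ℝ, y ∉ Set.Icc (-b) b → (y^2-1) * Real.sqrt (d - y^2) = 0 := by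
      intro y hy
      simp only [Set.mem_Icc, not_and_or, not_le] at hy
      have hy2 : d - y^2 ≤ 0 := by
        rcases hy with h | h
        · nlinarith
        · nlinarith
      rw [Real.sqrt_eq_zero_of_nonpos hy2, mul_zero]
    rw [← setIntegral_eq_integral_of_forall_compl_eq_zero hsupp,
      MeasureTheory.integral_Icc_eq_integral_Ioc,
      ← intervalIntegral.integral_of_le (by linarith)]
    have hcont : Continuous (fun y : ℝ => (y^3/4 - (d+4)*y/8) * Real.sqrt (d - y^2)
        + ((d^2 - 4*d)/8) * Real.arcsin (y / b)) := by
      apply Continuous.add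
      · apply Continuous.mul (by fun_prop)
        exact Real.continuous_sqrt.comp (by fun_prop)
      · exact continuous_const.mul (Real.continuous_arcsin.comp (by fun_prop))
    have hftc : ∫ y in (-b)..b, (y^2-1) * Real.sqrt (d - y^2)
        = ((b^3/4 - (d+4)*b/8) * Real.sqrt (d - b^2)
            + ((d^2 - 4*d)/8) * Real.arcsin (b / b))
          - (((-b)^3/4 - (d+4)*(-b)/8) * Real.sqrt (d - (-b)^2)
            + ((d^2 - 4*d)/8) * Real.arcsin ((-b) / b)) := by
      apply intervalIntegral.integral_eq_sub_of_hasDeriv_right_of_le (by linarith)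
        (hcont.continuousOn)
      · intro y hy
        rw [Set.mem_Ioo] at hy
        have hy2 : y^2 < d := by nlinarith
        have hs1 : (0:ℝ) < d - y^2 := by linarith
        have hs1p : 0 < Real.sqrt (d - y^2) := Real.sqrt_pos.mpr hs1
        have hs1sq : Real.sqrt (d - y^2)^2 = d - y^2 := Real.sq_sqrt hs1.le
        have hyb1 : y / b ≠ -1 := by
          intro h
          rw [div_eq_iff (ne_of_gt hb0)] at h
          nlinarith
        have hyb2 : y / b ≠ 1 := by
          intro h
          rw [div_eq_iff (ne_of_gt hb0)] at h
          nlinarith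
        have hsqrt_arg : Real.sqrt (1 - (y/b)^2) = Real.sqrt (d - y^2) / b := by
          have h5 : 1 - (y/b)^2 = (d - y^2)/d := by
            rw [div_pow]
            field_simp [hb2]
            rw [hb2]; ring
          rw [h5, Real.sqrt_div hs1.le, ← hb]
        have hdsq : HasDerivAt (fun y : ℝ => Real.sqrt (d - y^2))
            (1 / (2 * Real.sqrt (d - y^2)) * (-(2*y))) y := by
          have h1 : HasDerivAt (fun t : ℝ => d - t^2) (-(2*y)) y := by
            have := ((hasDerivAt_pow 2 y).const_sub d)
            refine this.congr_deriv ?_; push_cast; ring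
          exact (Real.hasDerivAt_sqrt (ne_of_gt hs1)).comp y h1
        have hpoly : HasDerivAt (fun y : ℝ => y^3/4 - (d+4)*y/8)
            (3*y^2/4 - (d+4)/8) y := by
          have h1 := ((hasDerivAt_pow 3 y).div_const 4)
          have h2 := (HasDerivAt.const_mul (d+4) (hasDerivAt_id y)).div_const 8
          have := h1.sub h2
          refine this.congr_deriv ?_
          push_cast; ring
        have harc : HasDerivAt (fun y : ℝ => Real.arcsin (y / b))
            (1 / Real.sqrt (1 - (y/b)^2) * (1/b)) y := by
          have h1 : HasDerivAt (fun y : ℝ => y / b) (1/b) y := (hasDerivAt_id y).div_const b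
          exact (Real.hasDerivAt_arcsin hyb1 hyb2).comp y h1
        have htotal := (hpoly.mul hdsq).add
          (HasDerivAt.const_mul ((d^2-4*d)/8) harc)
        have key : ∀ S : ℝ, 0 < S → S^2 = d - y^2 →
            (3*y^2/4 - (d+4)/8) * S
            + (y^3/4 - (d+4)*y/8) * (1/(2*S) * (-(2*y)))
            + ((d^2-4*d)/8) * (1 / (S / b) * (1/b))
            = (y^2-1) * S := by
          intro S hS hSsq
          have hd_eq : d = S^2 + y^2 := by linarith
          rw [hd_eq]
          field_simp
          ring
        have heq : (3*y^2/4 - (d+4)/8) * Real.sqrt (d - y^2)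
            + (y^3/4 - (d+4)*y/8) * (1/(2*Real.sqrt (d - y^2)) * (-(2*y)))
            + ((d^2-4*d)/8) * (1 / Real.sqrt (1 - (y/b)^2) * (1/b))
            = (y^2-1) * Real.sqrt (d - y^2) := by
          rw [hsqrt_arg]
          exact key (Real.sqrt (d - y^2)) hs1p hs1sq
        have hfinal : HasDerivAt (fun y : ℝ => (y^3/4 - (d+4)*y/8) * Real.sqrt (d - y^2)
            + ((d^2 - 4*d)/8) * Real.arcsin (y / b))
            ((y^2-1) * Real.sqrt (d - y^2)) y := by
          refine htotal.congr_deriv ?_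
          linear_combination heq
        exact hfinal.hasDerivWithinAt
      · apply Continuous.intervalIntegrable
        apply Continuous.mul (by fun_prop)
        exact Real.continuous_sqrt.comp (by fun_prop)
    rw [hftc]
    have h1 : Real.sqrt (d - b^2) = 0 := by
      rw [hb2]; simp
    have h2 : Real.sqrt (d - (-b)^2) = 0 := by
      rw [neg_sq, hb2]; simp
    have h3 : b / b = 1 := div_self (ne_of_gt hb0)
    have h4 : (-b) / b = -1 := by rw [neg_div, h3]
    rw [h1, h2, h3, h4, Real.arcsin_one, Real.arcsin_neg_one, hmax]
    ring

lemma rint {n : ℕ} (u : ℝ) (hu : 0 < u) :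
    ∫ r in Set.Ioi (0:ℝ), r ^ n * ((max (u - r^2) 0)^2 - 4 * max (u - r^2) 0)
      = 8*(Real.sqrt u)^(n+5)/((n+1)*(n+3)*(n+5)) - 8*(Real.sqrt u)^(n+3)/((n+1)*(n+3)) := by
  set t := Real.sqrt u with ht
  have ht0 : 0 < t := Real.sqrt_pos.mpr hu
  have ht2 : t^2 = u := Real.sq_sqrt hu.le
  have hcongr : ∀ r ∈ Set.Ioi (0:ℝ),
      r ^ n * ((max (u - r^2) 0)^2 - 4 * max (u - r^2) 0)
        = (Set.Ioc (0:ℝ) t).indicator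
            (fun r => r ^ n * ((max (u - r^2) 0)^2 - 4 * max (u - r^2) 0)) r := by
    intro r hr
    rw [Set.indicator_apply]
    split_ifs with h
    · rfl
    · have hr0 : (0:ℝ) < r := hr
      have hrt : t < r := by
        simp only [Set.mem_Ioc, not_and_or, not_le, not_lt] at h
        rcases h with h | h
        · linarith
        · exact h
      have : u - r^2 ≤ 0 := by nlinarith
      rw [max_eq_right this]
      ring
  rw [setIntegral_congr_fun measurableSet_Ioi hcongr,
    setIntegral_indicator measurableSet_Ioc,
    Set.inter_eq_self_of_subset_right Set.Ioc_subset_Ioi_self,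
    ← intervalIntegral.integral_of_le ht0.le]
  have hcongr2 : Set.EqOn
      (fun r : ℝ => r ^ n * ((max (u - r^2) 0)^2 - 4 * max (u - r^2) 0))
      (fun r : ℝ => u^2 * r^n - 2*u*r^(n+2) + r^(n+4) - 4*u*r^n + 4*r^(n+2))
      (Set.uIcc 0 t) := by
    intro r hr
    rw [Set.uIcc_of_le ht0.le, Set.mem_Icc] at hr
    have : 0 ≤ u - r^2 := by nlinarith
    simp only [max_eq_left this]
    ring
  rw [intervalIntegral.integral_congr hcongr2]
  have i1 : IntervalIntegrable (fun r : ℝ => u^2 * r^n) volume 0 t :=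
    (by fun_prop : Continuous fun r : ℝ => u^2 * r^n).intervalIntegrable _ _
  have i2 : IntervalIntegrable (fun r : ℝ => 2*u*r^(n+2)) volume 0 t :=
    (by fun_prop : Continuous fun r : ℝ => 2*u*r^(n+2)).intervalIntegrable _ _
  have i3 : IntervalIntegrable (fun r : ℝ => r^(n+4)) volume 0 t :=
    (by fun_prop : Continuous fun r : ℝ => r^(n+4)).intervalIntegrable _ _
  have i4 : IntervalIntegrable (fun r : ℝ => 4*u*r^n) volume 0 t :=
    (by fun_prop : Continuous fun r : ℝ => 4*u*r^n).intervalIntegrable _ _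
  have i5 : IntervalIntegrable (fun r : ℝ => 4*r^(n+2)) volume 0 t :=
    (by fun_prop : Continuous fun r : ℝ => 4*r^(n+2)).intervalIntegrable _ _
  rw [intervalIntegral.integral_add ((((i1.sub i2).add i3).sub i4)) i5,
    intervalIntegral.integral_sub ((i1.sub i2).add i3) i4,
    intervalIntegral.integral_add (i1.sub i2) i3,
    intervalIntegral.integral_sub i1 i2,
    intervalIntegral.integral_const_mul, intervalIntegral.integral_const_mul,
    intervalIntegral.integral_const_mul, intervalIntegral.integral_const_mul,
    integral_pow, integral_pow, integral_pow]
  rw [← ht2]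
  have c1 : ((n:ℝ)+1) ≠ 0 := by positivity
  have c3 : ((n:ℝ)+3) ≠ 0 := by positivity
  have c5 : ((n:ℝ)+5) ≠ 0 := by positivity
  push_cast
  field_simp
  ring

lemma radial {n : ℕ} (u : ℝ) :
    ∫ v : Fin (n+1) → ℝ, ((max (u - ∑ i, v i^2) 0)^2 - 4 * max (u - ∑ i, v i^2) 0)
      = ((n:ℝ)+1) * ((Real.sqrt π)^(n+1)/Real.Gamma (((n:ℝ)+1)/2+1)) *
        ∫ r in Set.Ioi (0:ℝ), r ^ n * ((max (u - r^2) 0)^2 - 4 * max (u - r^2) 0) := by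
  set E := EuclideanSpace ℝ (Fin (n+1)) with hE
  have hmp := EuclideanSpace.volume_preserving_symm_measurableEquiv_toLp (Fin (n+1))
  rw [← hmp.integral_comp (MeasurableEquiv.measurableEmbedding _)]
  have hnorm : ∀ x : E, (∑ i, ((MeasurableEquiv.toLp 2 (Fin (n+1) → ℝ)).symm x) i ^2) = ‖x‖^2 := by
    intro x
    rw [EuclideanSpace.norm_eq, Real.sq_sqrt (by positivity)]
    congr 1
    funext i
    rw [Real.norm_eq_abs, sq_abs]
    rfl
  simp_rw [hnorm]
  have hΓpos : 0 < Real.Gamma (((n:ℝ)+1)/2+1) := Real.Gamma_pos_of_pos (by positivity)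
  have key := MeasureTheory.integral_fun_norm_addHaar (volume : Measure E)
    (fun r : ℝ => (max (u - r^2) 0)^2 - 4 * max (u - r^2) 0)
  have hdim : Module.finrank ℝ E = n + 1 := finrank_euclideanSpace_fin
  rw [hdim] at key
  have hball : (volume (Metric.ball (0:E) 1)).toReal
      = (Real.sqrt π)^(n+1)/Real.Gamma (((n:ℝ)+1)/2+1) := by
    rw [show (volume (Metric.ball (0:E) 1)) = _ from EuclideanSpace.volume_ball (Fin (n+1)) 0 1]
    simp only [Fintype.card_fin, ENNReal.ofReal_one, one_pow, one_mul]
    rw [ENNReal.toReal_ofReal (by positivity)]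
    push_cast
    ring_nf
  calc ∫ x : E, ((max (u - ‖x‖^2) 0)^2 - 4 * max (u - ‖x‖^2) 0) ∂volume
      = (n+1) • ((volume (Metric.ball (0:E) 1)).toReal •
          ∫ r in Set.Ioi (0:ℝ), r ^ (n+1-1) •
            ((max (u - r^2) 0)^2 - 4 * max (u - r^2) 0)) := key
    _ = _ := by
        rw [hball]
        simp only [Nat.add_sub_cancel, nsmul_eq_mul, smul_eq_mul]
        push_cast
        ring

theorem stmt10 (k : ℕ) (hk : 2 ≤ k) (u : ℝ) (hu : 0 < u) :
    (2 * Real.pi) ^ (-(k : ℝ) / 2) *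
        ∫ z in {z : Fin k → ℝ | ∑ i, z i ^ 2 ≤ u},
          iteratedDeriv 2
            (fun s => iteratedDeriv 2
              (fun t => Real.exp
                (-(∑ i, Function.update (Function.update z ⟨1, by omega⟩ s) ⟨0, by omega⟩ t i ^ 2) / 2))
              (z ⟨0, by omega⟩))
            (z ⟨1, by omega⟩) =
      (2 * u / k - 2 * u ^ 2 / (k * (k + 2))) *
        (u ^ ((k : ℝ) / 2 - 1) * Real.exp (-u / 2) /
          (2 ^ ((k : ℝ) / 2) * Real.Gamma ((k : ℝ) / 2))) := by
  obtain ⟨m, rfl⟩ : ∃ m, k = m + 2 := ⟨k - 2, by omega⟩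
  have h01 : (0 : Fin (m+2)) ≠ 1 := by simp [Fin.ext_iff]
  show (2 * Real.pi) ^ (-((m+2 : ℕ) : ℝ) / 2) *
        ∫ z in {z : Fin (m+2) → ℝ | ∑ i, z i ^ 2 ≤ u},
          iteratedDeriv 2
            (fun s => iteratedDeriv 2
              (fun t => Real.exp
                (-(∑ i, Function.update (Function.update z 1 s) 0 t i ^ 2) / 2))
              (z 0))
            (z 1) =
      (2 * u / ((m+2 : ℕ) : ℝ) - 2 * u ^ 2 / (((m+2 : ℕ) : ℝ) * (((m+2 : ℕ) : ℝ) + 2))) *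
        (u ^ (((m+2 : ℕ) : ℝ) / 2 - 1) * Real.exp (-u / 2) /
          (2 ^ (((m+2 : ℕ) : ℝ) / 2) * Real.Gamma (((m+2 : ℕ) : ℝ) / 2)))
  -- Step 1: simplify the iterated derivatives
  have hΨ : ∀ z : Fin (m+2) → ℝ,
      iteratedDeriv 2
        (fun s => iteratedDeriv 2
          (fun t => Real.exp
            (-(∑ i, Function.update (Function.update z 1 s) 0 t i ^ 2) / 2))
          (z 0))
        (z 1)
      = (z 0^2-1) * ((z 1^2-1) * Real.exp (-(∑ i, z i^2)/2)) := by
    intro z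
    set B := ∑ i, z i^2 - z 0^2 - z 1^2 with hB
    have hsum : ∀ s t : ℝ, ∑ i, Function.update (Function.update z 1 s) 0 t i ^ 2
        = t^2 + (s^2 + B) := by
      intro s t
      rw [sum_update_sq, sum_update_sq, Function.update_of_ne h01]
      ring
    have h1 : (fun s => iteratedDeriv 2
          (fun t => Real.exp
            (-(∑ i, Function.update (Function.update z 1 s) 0 t i ^ 2) / 2))
          (z 0))
        = fun s => (z 0^2-1) * Real.exp (-(s^2 + (z 0^2 + B))/2) := by
      funext s
      have : (fun t => Real.exp
            (-(∑ i, Function.update (Function.update z 1 s) 0 t i ^ 2) / 2))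
          = fun t => Real.exp (-(t^2 + (s^2 + B))/2) := by
        funext t
        rw [hsum]
      rw [this, gauss_iteratedDeriv]
      congr 1
      congr 1
      ring
    rw [h1, gauss_iteratedDeriv']
    congr 2
    rw [hB]
    ring
  have hSmeas : MeasurableSet {z : Fin (m+2) → ℝ | ∑ i, z i ^ 2 ≤ u} :=
    measurableSet_le (by fun_prop) measurable_const
  rw [setIntegral_congr_fun hSmeas (fun z _ => hΨ z), ← integral_indicator hSmeas]
  set F : (Fin (m+2) → ℝ) → ℝ :=
    Set.indicator {z : Fin (m+2) → ℝ | ∑ i, z i ^ 2 ≤ u}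
      (fun z => (z 0^2-1) * ((z 1^2-1) * Real.exp (-(∑ i, z i^2)/2))) with hFdef
  -- Step 2: integrability
  have hcont : Continuous (fun z : Fin (m+2) → ℝ =>
      (z 0^2-1) * ((z 1^2-1) * Real.exp (-(∑ i, z i^2)/2))) := by fun_prop
  have hclosed : IsClosed {z : Fin (m+2) → ℝ | ∑ i, z i ^ 2 ≤ u} :=
    isClosed_le (by fun_prop) continuous_const
  have hsub : {z : Fin (m+2) → ℝ | ∑ i, z i ^ 2 ≤ u} ⊆ Metric.closedBall 0 (Real.sqrt u) := by
    intro z hz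
    simp only [Set.mem_setOf_eq] at hz
    rw [Metric.mem_closedBall, dist_zero_right]
    rw [pi_norm_le_iff_of_nonneg (Real.sqrt_nonneg u)]
    intro i
    rw [Real.norm_eq_abs]
    apply Real.abs_le_sqrt
    calc z i ^2 ≤ ∑ j, z j ^2 :=
          Finset.single_le_sum (fun j _ => sq_nonneg (z j)) (Finset.mem_univ i)
      _ ≤ u := hz
  have hcomp : IsCompact {z : Fin (m+2) → ℝ | ∑ i, z i ^ 2 ≤ u} :=
    (isCompact_closedBall _ _).of_isClosed_subset hclosed hsub
  have hF : Integrable F := by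
    rw [hFdef, integrable_indicator_iff hSmeas]
    exact hcont.continuousOn.integrableOn_compact hcomp
  -- Step 3: split coordinates
  rw [integral_split F hF, integral_split _ (integrable_split F hF)]
  -- Step 4: innermost integral
  have hx : ∀ w : Fin (m+1) → ℝ, (∫ x : ℝ, F (Fin.cons x w))
      = -2 * Real.exp (-u/2) * ((w 0^2-1) * Real.sqrt (u - ∑ i, w i^2)) := by
    intro w
    have hc : ∀ x : ℝ, F (Fin.cons x w)
        = ((w 0^2-1) * Real.exp (-(∑ i, w i^2)/2))
          * (if x^2 ≤ (u - ∑ i, w i^2) then (x^2-1) * Real.exp (-x^2/2) else 0) := by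
      intro x
      have hsum : ∑ i, (Fin.cons x w : Fin (m+2) → ℝ) i ^2 = x^2 + ∑ i, w i^2 := by
        simp [Fin.sum_univ_succ]
      rw [hFdef, Set.indicator_apply]
      simp only [Set.mem_setOf_eq, hsum]
      rw [show (Fin.cons x w : Fin (m+2) → ℝ) 0 = x from rfl,
        show (Fin.cons x w : Fin (m+2) → ℝ) 1 = w 0 from rfl]
      split_ifs with hA hB hB
      · rw [show -(x^2 + ∑ i, w i^2)/2 = -x^2/2 + -(∑ i, w i^2)/2 by ring, Real.exp_add]
        ring
      · exfalso; linarith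
      · exfalso; linarith
      · ring
    simp_rw [hc]
    rw [integral_const_mul, intA]
    rcases le_or_gt (u - ∑ i, w i^2) 0 with h | h
    · rw [Real.sqrt_eq_zero_of_nonpos h]
      ring
    · rw [show -(∑ i, w i^2)/2 = -u/2 - -(u - ∑ i, w i^2)/2 by ring, Real.exp_sub]
      field_simp
  simp_rw [hx]
  -- Step 5: second integral
  have hconsz : ∀ (y : ℝ) (v : Fin m → ℝ), (Fin.cons y v : Fin (m+1) → ℝ) 0 = y := fun _ _ => rfl
  have hconss : ∀ (y : ℝ) (v : Fin m → ℝ),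
      ∑ i, (Fin.cons y v : Fin (m+1) → ℝ) i ^2 = y^2 + ∑ i, v i^2 := by
    intro y v; simp [Fin.sum_univ_succ]
  have hy : ∀ v : Fin m → ℝ,
      (∫ y : ℝ, -2 * Real.exp (-u/2) *
        (((Fin.cons y v : Fin (m+1) → ℝ) 0^2-1)
          * Real.sqrt (u - ∑ i, (Fin.cons y v : Fin (m+1) → ℝ) i^2)))
      = (-2 * Real.exp (-u/2) * (Real.pi/8)) *
          ((max (u - ∑ i, v i^2) 0)^2 - 4 * max (u - ∑ i, v i^2) 0) := by
    intro v
    have : ∀ y : ℝ, -2 * Real.exp (-u/2) *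
        (((Fin.cons y v : Fin (m+1) → ℝ) 0^2-1)
          * Real.sqrt (u - ∑ i, (Fin.cons y v : Fin (m+1) → ℝ) i^2))
        = (-2 * Real.exp (-u/2)) * ((y^2-1) * Real.sqrt ((u - ∑ i, v i^2) - y^2)) := by
      intro y
      rw [hconsz, hconss, show u - (y^2 + ∑ i, v i^2) = (u - ∑ i, v i^2) - y^2 by ring]
    simp_rw [this]
    rw [integral_const_mul, intB]
    ring
  simp_rw [hy]
  rw [integral_const_mul]
  -- Step 6: radial integral
  rcases m with _ | n
  · -- m = 0, k = 2
    have huniq : ∫ v : Fin 0 → ℝ,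
        ((max (u - ∑ i, v i^2) 0)^2 - 4 * max (u - ∑ i, v i^2) 0)
        = ((max u 0)^2 - 4 * max u 0) := by
      rw [integral_unique]
      have hone : (volume (Set.univ : Set (Fin 0 → ℝ))) = 1 := by
        rw [MeasureTheory.volume_pi]
        exact MeasureTheory.Measure.pi_empty_univ _
      rw [measureReal_def, hone]
      simp
    rw [huniq, max_eq_left hu.le]
    rw [show (-(((0:ℕ)+2 : ℕ) : ℝ)/2) = -1 by norm_num]
    rw [show ((((0:ℕ)+2 : ℕ) : ℝ)/2) = 1 by norm_num]
    rw [Real.rpow_neg_one, Real.rpow_one, show ((1:ℝ) - 1) = 0 by ring,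
      Real.rpow_zero, Real.Gamma_one]
    have hπ : Real.pi ≠ 0 := Real.pi_ne_zero
    push_cast
    field_simp
    ring
  · -- m = n + 1
    rw [radial u, rint u hu]
    set t := Real.sqrt u with htdef
    have ht0 : 0 < t := Real.sqrt_pos.mpr hu
    have ht2 : t^2 = u := Real.sq_sqrt hu.le
    set P := Real.sqrt π with hPdef
    have hP0 : 0 < P := Real.sqrt_pos.mpr Real.pi_pos
    have hP2 : P^2 = π := Real.sq_sqrt Real.pi_pos.le
    have hk3 : ((n+1+2 : ℕ) : ℝ) = (n:ℝ) + 3 := by push_cast; ring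
    have hΓeq : Real.Gamma (((n:ℝ)+1)/2+1) = Real.Gamma (((n+1+2 : ℕ) : ℝ)/2) := by
      congr 1
      rw [hk3]; ring
    have hΓpos : 0 < Real.Gamma (((n+1+2 : ℕ) : ℝ)/2) :=
      Real.Gamma_pos_of_pos (by rw [hk3]; positivity)
    -- rpow facts
    have hPn : P^(n+1) = π ^ (((n:ℝ)+1)/2) := by
      rw [hPdef, Real.sqrt_eq_rpow, ← Real.rpow_natCast (π ^ ((1:ℝ)/2)) (n+1),
        ← Real.rpow_mul Real.pi_pos.le]
      congr 1
      push_cast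
      ring
    have hpi_split : π ^ ((((n+1+2 : ℕ)) : ℝ)/2) = π * π ^ (((n:ℝ)+1)/2) := by
      rw [mul_comm, ← Real.rpow_add_one Real.pi_ne_zero]
      congr 1
      rw [hk3]
      ring
    have h2π : (2 * Real.pi) ^ (-(((n+1+2 : ℕ) : ℝ))/2)
        = (2 ^ ((((n+1+2 : ℕ) : ℝ))/2))⁻¹ * (π * P^(n+1))⁻¹ := by
      rw [show (-(((n+1+2 : ℕ) : ℝ))/2) = -((((n+1+2 : ℕ) : ℝ))/2) by ring,
        Real.rpow_neg (by positivity), Real.mul_rpow (by norm_num) Real.pi_pos.le,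
        mul_inv, hPn, ← hpi_split]
    have hu_pow : u ^ ((((n+1+2 : ℕ) : ℝ))/2 - 1) = t^(n+1) := by
      rw [htdef, Real.sqrt_eq_rpow, ← Real.rpow_natCast (u ^ ((1:ℝ)/2)) (n+1),
        ← Real.rpow_mul hu.le, hk3]
      congr 1
      push_cast
      ring
    rw [h2π, hu_pow, hΓeq]
    rw [← ht2]
    have c1 : ((n:ℝ)+1) ≠ 0 := by positivity
    have c3 : ((n:ℝ)+3) ≠ 0 := by positivity
    have c5 : ((n:ℝ)+5) ≠ 0 := by positivity
    have hT2 : (0:ℝ) < 2 ^ ((((n+1+2 : ℕ) : ℝ))/2) := by positivity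
    rw [hk3]
    push_cast
    rw [← hP2]
    field_simp
    ring
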